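/- arXiv:1210.6712 — 2 statements merged into one kernel-verified Lean document; each statement's English description precedes it below -/
import Mathlib

section
/- A nonnegative square matrix A over the reals is nilpotent if and only if the directed graph with an edge from i to j whenever A(i,j) > 0 contains no directed cycle. -/
/-!
For a nonnegative matrix, `(A ^ k) i j` is a sum of products of entries along walks of length `k`
from `i` to `j`, so it is positive exactly when the graph of positive entries has such a walk.
A cycle can then be traversed arbitrarily often, so no power of `A` vanishes; conversely,
without cycles every walk has fewer than `n` steps by pigeonhole, so `A ^ n = 0`.
-/

section Walks

variable {ι : Type*} (r : ι → ι → Prop)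

theorem exists_walk_succ_iff (i j : ι) (k : ℕ) :
    (∃ c : ℕ → ι, c 0 = i ∧ c (k + 1) = j ∧ ∀ t < k + 1, r (c t) (c (t + 1))) ↔
      ∃ l, (∃ c : ℕ → ι, c 0 = i ∧ c k = l ∧ ∀ t < k, r (c t) (c (t + 1))) ∧ r l j := by
  constructor
  · rintro ⟨c, rfl, rfl, hc⟩
    exact ⟨c k, ⟨c, rfl, rfl, fun t ht => hc t (by omega)⟩, hc k k.lt_succ_self⟩
  · rintro ⟨l, ⟨c, rfl, rfl, hc⟩, hlj⟩
    refine ⟨fun t => if t ≤ k then c t else j, by simp, by simp, fun t ht => ?_⟩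
    rcases Nat.lt_or_ge t k with htk | htk
    · simpa [htk.le, Nat.succ_le_of_lt htk] using hc t htk
    · obtain rfl : t = k := by omega
      simpa using hlj

theorem exists_cycle_of_walk_of_eq {k p q : ℕ} {c : ℕ → ι}
    (hc : ∀ t < k, r (c t) (c (t + 1))) (hpq : p < q) (hqk : q ≤ k) (hcpq : c p = c q) :
    ∃ (m : ℕ) (d : ℕ → ι), 1 ≤ m ∧ d 0 = d m ∧ ∀ t < m, r (d t) (d (t + 1)) := by
  refine ⟨q - p, fun t => c (p + t), by omega, by simpa [Nat.add_sub_cancel' hpq.le], ?_⟩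
  intro t ht
  simpa [Nat.add_assoc] using hc (p + t) (by omega)

/-- Pigeonhole: a walk visiting more than `Fintype.card ι` vertices repeats one of them. -/
theorem exists_cycle_of_card_le_walk_length [Fintype ι] {k : ℕ} {c : ℕ → ι}
    (hc : ∀ t < k, r (c t) (c (t + 1))) (hk : Fintype.card ι ≤ k) :
    ∃ (m : ℕ) (d : ℕ → ι), 1 ≤ m ∧ d 0 = d m ∧ ∀ t < m, r (d t) (d (t + 1)) := by
  obtain ⟨p, q, hpq, hcpq⟩ :=
    Fintype.exists_ne_map_eq_of_card_lt (fun t : Fin (k + 1) => c t) (by simpa using hk)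
  rcases Fin.lt_or_lt_of_ne hpq with h | h
  · exact exists_cycle_of_walk_of_eq r hc h (Nat.lt_succ_iff.mp q.2) hcpq
  · exact exists_cycle_of_walk_of_eq r hc h (Nat.lt_succ_iff.mp p.2) hcpq.symm

end Walks

theorem mul_pos_iff_of_nonneg {R : Type*} [Semiring R] [PartialOrder R] [PosMulStrictMono R]
    {a b : R} (ha : 0 ≤ a) (hb : 0 ≤ b) : 0 < a * b ↔ 0 < a ∧ 0 < b := by
  refine ⟨fun hab => ⟨ha.lt_of_ne ?_, hb.lt_of_ne ?_⟩, fun h => mul_pos h.1 h.2⟩ <;>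
    rintro rfl <;> simp at hab

namespace Matrix

variable {ι R : Type*} [Fintype ι] [DecidableEq ι] [Semiring R] [PartialOrder R]
  [IsOrderedRing R] [PosMulStrictMono R] [Nontrivial R] {A : Matrix ι ι R}

theorem pow_apply_pos_iff_exists_walk (hA : ∀ i j, 0 ≤ A i j) (k : ℕ) (i j : ι) :
    0 < (A ^ k) i j ↔ ∃ c : ℕ → ι, c 0 = i ∧ c k = j ∧ ∀ t < k, 0 < A (c t) (c (t + 1)) := by
  induction k generalizing j with
  | zero =>
    rcases eq_or_ne i j with rfl | hij
    · simpa using ⟨fun _ => i, rfl⟩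
    · simpa [hij] using fun (c : ℕ → ι) (hc : c 0 = i) => hc ▸ hij
  | succ k ih =>
    rw [exists_walk_succ_iff (fun a b => 0 < A a b), pow_succ, mul_apply,
      Finset.sum_pos_iff_of_nonneg fun l _ => mul_nonneg (pow_apply_nonneg hA k i l) (hA l j)]
    simp only [Finset.mem_univ, true_and, ← ih,
      mul_pos_iff_of_nonneg (pow_apply_nonneg hA k i _) (hA _ j)]

theorem pow_apply_self_pos (hA : ∀ i j, 0 ≤ A i j) {i : ι} (hi : 0 < A i i) (m : ℕ) :
    0 < (A ^ m) i i :=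
  (pow_apply_pos_iff_exists_walk hA m i i).2 ⟨fun _ => i, rfl, rfl, fun _ _ => hi⟩

/-- Going `m` times around a cycle of length `k` gives a positive diagonal entry of `A ^ (k * m)`. -/
theorem not_isNilpotent_of_cycle (hA : ∀ i j, 0 ≤ A i j) {k : ℕ} {c : ℕ → ι} (hk : 1 ≤ k)
    (hc0 : c 0 = c k) (hc : ∀ t < k, 0 < A (c t) (c (t + 1))) : ¬ IsNilpotent A := by
  rintro ⟨m, hm⟩
  have hcycle : 0 < (A ^ k) (c 0) (c 0) :=
    (pow_apply_pos_iff_exists_walk hA k _ _).2 ⟨c, rfl, hc0.symm, hc⟩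
  have hpos := pow_apply_self_pos (pow_apply_nonneg hA k) hcycle m
  rw [← pow_mul, mul_comm, pow_mul, hm, zero_pow (by omega)] at hpos
  exact hpos.ne rfl

theorem pow_eq_zero_of_no_cycle (hA : ∀ i j, 0 ≤ A i j)
    (hA_acyclic : ¬ ∃ (m : ℕ) (c : ℕ → ι), 1 ≤ m ∧ c 0 = c m ∧
      ∀ t < m, 0 < A (c t) (c (t + 1)))
    {k : ℕ} (hk : Fintype.card ι ≤ k) : A ^ k = 0 := by
  ext i j
  refine (pow_apply_nonneg hA k i j).eq_of_not_lt' fun hpos => hA_acyclic ?_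
  obtain ⟨c, -, -, hc⟩ := (pow_apply_pos_iff_exists_walk hA k i j).1 hpos
  exact exists_cycle_of_card_le_walk_length (fun a b => 0 < A a b) hc hk

end Matrix

theorem nonneg_nilpotent_iff_no_cycle {n : ℕ} (A : Matrix (Fin n) (Fin n) ℝ)
    (hA : ∀ i j, 0 ≤ A i j) :
    (∃ k : ℕ, 1 ≤ k ∧ A ^ k = 0) ↔
      ¬ ∃ (k : ℕ) (c : ℕ → Fin n), 1 ≤ k ∧ c 0 = c k ∧
        ∀ i < k, 0 < A (c i) (c (i + 1)) := by
  constructor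
  · rintro ⟨m, -, hm⟩ ⟨k, c, hk, hc0, hc⟩
    exact Matrix.not_isNilpotent_of_cycle hA hk hc0 hc ⟨m, hm⟩
  · intro h_acyclic
    exact ⟨n + 1, by omega, Matrix.pow_eq_zero_of_no_cycle hA h_acyclic (by simp)⟩
end

section
/- Let A be a nonnegative n × n matrix. Then A is nilpotent if and only if A can be reduced to the zero matrix by repeatedly applying the following operation: if the i-th row of the current matrix is entirely zero, replace the i-th column by zeros; and if the i-th column is entirely zero, replace the i-th row by zeros. -/
/-!
Zeroing column `i` of `M` is right multiplication by the diagonal idempotent `c` that kills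
the `i`-th coordinate, and when row `i` of `M` vanishes, `c * M = M`; in any monoid this
forces `M * M ^ k = (M * c) ^ k * M`, so the step preserves nilpotency in both directions
(dually for rows). Hence reducibility to `0` implies nilpotency.

Conversely, in a nonnegative matrix whose every nonzero column has a nonzero row of the same
index, the nonzero columns carry walks of positive entries of every length, so no power
vanishes. A nilpotent nonnegative matrix `M ≠ 0` thus has an index `i` with zero row and
nonzero column; zeroing that column keeps `M` nonnegative and nilpotent and shrinks the set
of nonzero columns, and induction on that set reaches `0`.
-/

/-- One step of the reduction process: if a row is zero, zero out the column with the
same index; if a column is zero, zero out the row with the same index. -/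
def redStep {n : ℕ} (M M' : Matrix (Fin n) (Fin n) ℝ) : Prop :=
  ∃ i : Fin n,
    ((∀ j, M i j = 0) ∧ M' = M.updateCol i (fun _ => 0)) ∨
    ((∀ j, M j i = 0) ∧ M' = M.updateRow i (fun _ => 0))

section Monoid

variable {M : Type*} [MonoidWithZero M] {a c : M}

theorem exists_pos_pow_eq_zero_iff_isNilpotent :
    (∃ k : ℕ, 1 ≤ k ∧ a ^ k = 0) ↔ IsNilpotent a :=
  ⟨fun ⟨k, _, hk⟩ => ⟨k, hk⟩,
    fun ⟨k, hk⟩ => ⟨k + 1, Nat.le_add_left 1 k, by rw [pow_succ, hk, zero_mul]⟩⟩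

theorem isNilpotent_mul_right_iff_of_mul_eq_self (h : c * a = a) :
    IsNilpotent (a * c) ↔ IsNilpotent a := by
  have key (k : ℕ) : a * a ^ k = (a * c) ^ k * a :=
    (SemiconjBy.pow_right (by rw [SemiconjBy, mul_assoc, h]) k).eq
  constructor
  · rintro ⟨k, hk⟩
    exact ⟨k + 1, by rw [pow_succ', key, hk, zero_mul]⟩
  · rintro ⟨k, hk⟩
    exact ⟨k + 1, by rw [pow_succ, ← mul_assoc, ← key, hk, mul_zero, zero_mul]⟩

theorem isNilpotent_mul_left_iff_of_mul_eq_self (h : a * c = a) :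
    IsNilpotent (c * a) ↔ IsNilpotent a := by
  have key (k : ℕ) : a * (c * a) ^ k = a ^ k * a :=
    (SemiconjBy.pow_right (by rw [SemiconjBy, ← mul_assoc, h]) k).eq
  constructor
  · rintro ⟨k, hk⟩
    exact ⟨k + 1, by rw [pow_succ, ← key, hk, mul_zero]⟩
  · rintro ⟨k, hk⟩
    exact ⟨k + 1, by rw [pow_succ', mul_assoc, key, hk, zero_mul, mul_zero]⟩

end Monoid

namespace Matrix

variable {ι R : Type*} [Fintype ι] [DecidableEq ι]

section Semiring

variable [Semiring R] (M : Matrix ι ι R) (i : ι)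

theorem updateCol_zero_eq_mul_diagonal :
    M.updateCol i (fun _ => 0) = M * diagonal (Function.update 1 i 0) := by
  ext a b
  by_cases hb : b = i <;> simp [mul_diagonal, hb]

theorem updateRow_zero_eq_diagonal_mul :
    M.updateRow i (fun _ => 0) = diagonal (Function.update 1 i 0) * M := by
  ext a b
  by_cases ha : a = i <;> simp [updateRow_apply, diagonal_mul, ha]

theorem diagonal_update_one_zero_mul_of_row_eq_zero (h : ∀ j, M i j = 0) :
    diagonal (Function.update 1 i 0) * M = M := by
  ext a b
  by_cases ha : a = i <;> simp [diagonal_mul, ha, h]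

theorem mul_diagonal_update_one_zero_of_col_eq_zero (h : ∀ j, M j i = 0) :
    M * diagonal (Function.update 1 i 0) = M := by
  ext a b
  by_cases hb : b = i <;> simp [mul_diagonal, hb, h]

end Semiring

section OrderedSemiring

variable [Semiring R] [PartialOrder R] [IsStrictOrderedRing R] {M : Matrix ι ι R}

theorem exists_pow_apply_pos_of_forall_exists_pos (hM : ∀ i j, 0 ≤ M i j) {S : Set ι}
    (hS : ∀ i ∈ S, ∃ j ∈ S, 0 < M i j) (k : ℕ) {i : ι} (hi : i ∈ S) :
    ∃ j, 0 < (M ^ k) i j := by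
  induction k generalizing i with
  | zero => exact ⟨i, by simp⟩
  | succ k ih =>
    obtain ⟨l, hl, hil⟩ := hS i hi
    obtain ⟨j, hlj⟩ := ih hl
    refine ⟨j, (mul_pos hil hlj).trans_le ?_⟩
    rw [pow_succ', mul_apply]
    exact Finset.single_le_sum (f := fun x => M i x * (M ^ k) x j)
      (fun x _ => mul_nonneg (hM i x) (pow_apply_nonneg hM k x j)) (Finset.mem_univ l)

theorem not_isNilpotent_of_forall_exists_pos (hM : ∀ i j, 0 ≤ M i j) {S : Set ι}
    (hS : ∀ i ∈ S, ∃ j ∈ S, 0 < M i j) (hne : S.Nonempty) : ¬IsNilpotent M := by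
  rintro ⟨k, hk⟩
  obtain ⟨j, hj⟩ := exists_pow_apply_pos_of_forall_exists_pos hM hS k hne.some_mem
  simp [hk] at hj

theorem exists_row_eq_zero_and_col_ne_zero (hM : ∀ i j, 0 ≤ M i j) (hnil : IsNilpotent M)
    (h0 : M ≠ 0) : ∃ i, (∀ j, M i j = 0) ∧ ∃ j, M j i ≠ 0 := by
  by_contra! h
  refine not_isNilpotent_of_forall_exists_pos hM (S := {i | ∃ j, M j i ≠ 0}) ?_ ?_ hnil
  · rintro i ⟨j, hji⟩
    obtain ⟨l, hil⟩ : ∃ l, M i l ≠ 0 := by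
      by_contra! hrow
      exact hji (h i hrow j)
    exact ⟨l, ⟨i, hil⟩, (hM i l).lt_of_ne' hil⟩
  · obtain ⟨a, b, hab⟩ : ∃ a b, M a b ≠ 0 := by
      by_contra! hM0
      exact h0 (ext hM0)
    exact ⟨b, a, hab⟩

end OrderedSemiring

end Matrix

open Matrix

section redStep

variable {n : ℕ} {M M' : Matrix (Fin n) (Fin n) ℝ}

theorem redStep.isNilpotent_iff (h : redStep M M') : IsNilpotent M' ↔ IsNilpotent M := by
  obtain ⟨i, ⟨hrow, rfl⟩ | ⟨hcol, rfl⟩⟩ := h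
  · rw [updateCol_zero_eq_mul_diagonal]
    exact isNilpotent_mul_right_iff_of_mul_eq_self
      (diagonal_update_one_zero_mul_of_row_eq_zero M i hrow)
  · rw [updateRow_zero_eq_diagonal_mul]
    exact isNilpotent_mul_left_iff_of_mul_eq_self
      (mul_diagonal_update_one_zero_of_col_eq_zero M i hcol)

theorem isNilpotent_of_reflTransGen_redStep_zero (h : Relation.ReflTransGen redStep M 0) :
    IsNilpotent M := by
  induction h using Relation.ReflTransGen.head_induction_on with
  | refl => exact IsNilpotent.zero
  | head hstep _ ih => exact (redStep.isNilpotent_iff hstep).mp ih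

theorem reflTransGen_redStep_zero_of_isNilpotent (s : Finset (Fin n)) (hM : ∀ i j, 0 ≤ M i j)
    (hnil : IsNilpotent M) (hs : ∀ j ∉ s, ∀ a, M a j = 0) :
    Relation.ReflTransGen redStep M 0 := by
  induction s using Finset.strongInduction generalizing M with
  | H s ih =>
    by_cases h0 : M = 0
    · rw [h0]
    obtain ⟨i, hrow, j, hji⟩ := exists_row_eq_zero_and_col_ne_zero hM hnil h0
    have hi : i ∈ s := by
      by_contra hi
      exact hji (hs i hi j)
    have hstep : redStep M (M.updateCol i fun _ => 0) := ⟨i, .inl ⟨hrow, rfl⟩⟩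
    refine .head hstep
      (ih _ (Finset.erase_ssubset hi) ?_ ((redStep.isNilpotent_iff hstep).mpr hnil) ?_)
    · intro a b
      by_cases hb : b = i <;> simp [hb, hM a b]
    · intro b hb a
      by_cases hbi : b = i <;> simp_all

end redStep

theorem nonneg_nilpotent_iff_reducible_to_zero {n : ℕ} (A : Matrix (Fin n) (Fin n) ℝ)
    (hA : ∀ i j, 0 ≤ A i j) :
    (∃ k : ℕ, 1 ≤ k ∧ A ^ k = 0) ↔ Relation.ReflTransGen redStep A 0 := by
  rw [exists_pos_pow_eq_zero_iff_isNilpotent]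
  exact ⟨fun hnil => reflTransGen_redStep_zero_of_isNilpotent Finset.univ hA hnil (by simp),
    isNilpotent_of_reflTransGen_redStep_zero⟩
end
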